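/- Let K ≥ 2 and fix t ≥ 0. Then lim_{b → 0⁺} C(b, t) = 0. Consequently, the Dirichlet conditional vector field u_t(x | x_1 = e_i) = C(x_i, t)(e_i − x) vanishes as x approaches the face of the simplex opposite the target vertex e_i. -/

import Mathlib

open Filter

/-- The incomplete beta function `B(x; a, c) = ∫_0^x s^{a-1}(1-s)^{c-1} ds`. -/
noncomputable def incBeta (x a c : ℝ) : ℝ := ∫ s in (0:ℝ)..x, s ^ (a - 1) * (1 - s) ^ (c - 1)

/-- The regularized incomplete beta function `I_x(a, c) = B(x; a, c) / B(a, c)`. -/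
noncomputable def regIncBeta (x a c : ℝ) : ℝ := incBeta x a c / incBeta 1 a c

/-- `Ĩ_x(a, c) = ∂ I_x(a, c) / ∂a`. -/
noncomputable def Itilde (x a c : ℝ) : ℝ := deriv (fun a' : ℝ => regIncBeta x a' c) a

/-- The Dirichlet flow-matching coefficient
`C(b, t) = -Ĩ_b(t+1, K-1) · B(t+1, K-1) / ((1-b)^{K-1} · b^t)`. -/
noncomputable def Ccoef (K : ℕ) (b t : ℝ) : ℝ :=
  -Itilde b (t + 1) ((K : ℝ) - 1) * incBeta 1 (t + 1) ((K : ℝ) - 1) /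
    ((1 - b) ^ (K - 1) * b ^ t)

/-!
Write `a = t + 1`, `c = K - 1` and `J(x) = ∂ₐ B(x; a, c) = ∫₀ˣ log s · s^{a-1} (1-s)^{c-1} ds`
(differentiation under the integral sign). The quotient rule turns `C(b, t)` into
`(B(b; a, c) / bᵗ · J(1) / B(a, c) - J(b) / bᵗ) / (1 - b)^{K-1}`. Since `B(b; a, c) ≤ bᵃ / a`
and, by `|log s| ≤ ε⁻¹ s^{-ε}`, `|J(b)| ≤ ε⁻¹ b^{a-ε} / (a - ε)`, both quotients by `bᵗ` are
bounded by multiples of positive powers of `b`, while `(1 - b)^{K-1} → 1`.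
-/

open Real MeasureTheory Set Topology

noncomputable def betaIntegrand (a c s : ℝ) : ℝ := s ^ (a - 1) * (1 - s) ^ (c - 1)

noncomputable def incBetaLog (x a c : ℝ) : ℝ := ∫ s in (0:ℝ)..x, log s * betaIntegrand a c s

lemma incBeta_eq_integral_betaIntegrand (x a c : ℝ) :
    incBeta x a c = ∫ s in (0:ℝ)..x, betaIntegrand a c s := rfl

section BetaIntegrand

variable {a c s : ℝ}

lemma betaIntegrand_nonneg (hs0 : 0 ≤ s) (hs1 : s ≤ 1) : 0 ≤ betaIntegrand a c s :=
  mul_nonneg (rpow_nonneg hs0 _) (rpow_nonneg (by linarith) _)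

lemma betaIntegrand_le (hs0 : 0 ≤ s) (hs1 : s ≤ 1) (hc : 1 ≤ c) :
    betaIntegrand a c s ≤ s ^ (a - 1) :=
  mul_le_of_le_one_right (rpow_nonneg hs0 _) (rpow_le_one (by linarith) (by linarith) (by linarith))

lemma abs_log_le_inv_mul_rpow_neg {ε : ℝ} (hs0 : 0 < s) (hs1 : s ≤ 1) (hε : 0 < ε) :
    |log s| ≤ ε⁻¹ * s ^ (-ε) := by
  have h := (Real.abs_log_mul_self_rpow_lt s ε hs0 hs1 hε).le
  rw [abs_mul, abs_of_pos (rpow_pos_of_pos hs0 ε), ← le_div_iff₀ (rpow_pos_of_pos hs0 ε)] at h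
  rwa [rpow_neg hs0.le, ← div_eq_mul_inv, ← one_div_div, div_div_eq_mul_div]

lemma abs_log_mul_betaIntegrand_le {ε : ℝ} (hs0 : 0 < s) (hs1 : s ≤ 1) (hc : 1 ≤ c)
    (hε : 0 < ε) : |log s * betaIntegrand a c s| ≤ ε⁻¹ * s ^ (a - 1 - ε) := by
  rw [abs_mul, abs_of_nonneg (betaIntegrand_nonneg hs0.le hs1), sub_eq_add_neg (a - 1),
    rpow_add hs0, mul_comm (s ^ (a - 1)), ← mul_assoc]
  exact mul_le_mul (abs_log_le_inv_mul_rpow_neg hs0 hs1 hε) (betaIntegrand_le hs0.le hs1 hc)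
    (betaIntegrand_nonneg hs0.le hs1) (by positivity)

lemma hasDerivAt_betaIntegrand (hs0 : 0 < s) :
    HasDerivAt (fun a' => betaIntegrand a' c s) (log s * betaIntegrand a c s) a := by
  have h := (((hasDerivAt_id a).sub_const 1).const_rpow hs0).mul_const ((1 - s) ^ (c - 1))
  exact h.congr_deriv (by simp only [betaIntegrand, id]; ring)

end BetaIntegrand

lemma measurable_betaIntegrand (a c : ℝ) : Measurable (betaIntegrand a c) := by
  unfold betaIntegrand
  fun_prop

section IncBeta

variable {x a c : ℝ}

lemma intervalIntegrable_betaIntegrand (hx0 : 0 ≤ x) (hx1 : x ≤ 1) (ha : 0 < a) (hc : 1 ≤ c) :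
    IntervalIntegrable (betaIntegrand a c) volume 0 x := by
  refine (intervalIntegral.intervalIntegrable_rpow' (r := a - 1) (by linarith)).mono_fun'
    (measurable_betaIntegrand a c).aestronglyMeasurable ?_
  rw [uIoc_of_le hx0]
  filter_upwards [ae_restrict_mem measurableSet_Ioc] with s hs
  rw [Real.norm_eq_abs, abs_of_nonneg (betaIntegrand_nonneg hs.1.le (hs.2.trans hx1))]
  exact betaIntegrand_le hs.1.le (hs.2.trans hx1) hc

lemma hasDerivAt_incBeta (hx0 : 0 ≤ x) (hx1 : x ≤ 1) (ha : 0 < a) (hc : 1 ≤ c) :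
    HasDerivAt (fun a' => incBeta x a' c) (incBetaLog x a c) a := by
  have hmeas : Measurable fun s => log s * betaIntegrand a c s :=
    measurable_log.mul (measurable_betaIntegrand a c)
  -- On the ball of radius `a / 2`, every exponent `a' - 1 - a / 4` is at least `a / 4 - 1 > -1`.
  refine (intervalIntegral.hasDerivAt_integral_of_dominated_loc_of_deriv_le
    (F := fun a' s => betaIntegrand a' c s) (F' := fun a' s => log s * betaIntegrand a' c s)
    (bound := fun s => (a / 4)⁻¹ * s ^ (a / 4 - 1)) (s := Metric.ball a (a / 2))
    (Metric.ball_mem_nhds a (half_pos ha))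
    (Eventually.of_forall fun a' => (measurable_betaIntegrand a' c).aestronglyMeasurable)
    (intervalIntegrable_betaIntegrand hx0 hx1 ha hc) hmeas.aestronglyMeasurable ?_
    ((intervalIntegral.intervalIntegrable_rpow' (by linarith)).const_mul _) ?_).2
  · refine ae_of_all _ fun s hs a' ha' => ?_
    rw [uIoc_of_le hx0] at hs
    have ha' : a / 2 < a' := by
      have := abs_sub_lt_iff.mp (Metric.mem_ball.mp ha'); linarith
    calc ‖log s * betaIntegrand a' c s‖ ≤ (a / 4)⁻¹ * s ^ (a' - 1 - a / 4) :=
          abs_log_mul_betaIntegrand_le hs.1 (hs.2.trans hx1) hc (by positivity)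
      _ ≤ (a / 4)⁻¹ * s ^ (a / 4 - 1) := mul_le_mul_of_nonneg_left
          (rpow_le_rpow_of_exponent_ge hs.1 (hs.2.trans hx1) (by linarith)) (by positivity)
  · exact ae_of_all _ fun s hs a' _ => by
      rw [uIoc_of_le hx0] at hs
      exact hasDerivAt_betaIntegrand hs.1

lemma abs_incBeta_le (hx0 : 0 ≤ x) (hx1 : x ≤ 1) (ha : 0 < a) (hc : 1 ≤ c) :
    |incBeta x a c| ≤ x ^ a / a := by
  refine (intervalIntegral.norm_integral_le_of_norm_le (f := betaIntegrand a c)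
    (g := fun s => s ^ (a - 1)) hx0 (ae_of_all _ fun s hs => ?_)
    (intervalIntegral.intervalIntegrable_rpow' (by linarith))).trans_eq ?_
  · rw [Real.norm_eq_abs, abs_of_nonneg (betaIntegrand_nonneg hs.1.le (hs.2.trans hx1))]
    exact betaIntegrand_le hs.1.le (hs.2.trans hx1) hc
  · rw [integral_rpow (Or.inl (by linarith)), sub_add_cancel, zero_rpow ha.ne', sub_zero]

lemma abs_incBetaLog_le {ε : ℝ} (hx0 : 0 ≤ x) (hx1 : x ≤ 1) (hc : 1 ≤ c) (hε : 0 < ε)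
    (hεa : ε < a) : |incBetaLog x a c| ≤ ε⁻¹ * (x ^ (a - ε) / (a - ε)) := by
  calc |incBetaLog x a c| ≤ ∫ s in (0:ℝ)..x, ε⁻¹ * s ^ (a - 1 - ε) :=
        intervalIntegral.norm_integral_le_of_norm_le (f := fun s => log s * betaIntegrand a c s)
          hx0 (ae_of_all _ fun s hs => abs_log_mul_betaIntegrand_le hs.1 (hs.2.trans hx1) hc hε)
          ((intervalIntegral.intervalIntegrable_rpow' (by linarith)).const_mul _)
    _ = ε⁻¹ * (x ^ (a - ε) / (a - ε)) := by
        rw [intervalIntegral.integral_const_mul, integral_rpow (Or.inl (by linarith)),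
          show a - 1 - ε + 1 = a - ε by ring, zero_rpow (by linarith), sub_zero]

lemma incBeta_one_pos (ha : 0 < a) (hc : 1 ≤ c) : 0 < incBeta 1 a c :=
  intervalIntegral.intervalIntegral_pos_of_pos_on
    (intervalIntegrable_betaIntegrand zero_le_one le_rfl ha hc)
    (fun s hs => mul_pos (rpow_pos_of_pos hs.1 _) (rpow_pos_of_pos (by linarith [hs.2]) _))
    one_pos

lemma Itilde_eq (hx0 : 0 ≤ x) (hx1 : x ≤ 1) (ha : 0 < a) (hc : 1 ≤ c) :
    Itilde x a c = (incBetaLog x a c * incBeta 1 a c - incBeta x a c * incBetaLog 1 a c) /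
      incBeta 1 a c ^ 2 :=
  ((hasDerivAt_incBeta hx0 hx1 ha hc).div (hasDerivAt_incBeta zero_le_one le_rfl ha hc)
    (incBeta_one_pos ha hc).ne').deriv

end IncBeta

lemma tendsto_nhdsGT_zero_of_abs_le_mul_rpow {f : ℝ → ℝ} {C p : ℝ} (hp : 0 < p)
    (hf : ∀ b ∈ Ioc (0:ℝ) 1, |f b| ≤ C * b ^ p) : Tendsto f (𝓝[>] 0) (𝓝 0) := by
  have hbound : Tendsto (fun b : ℝ => C * b ^ p) (𝓝[>] 0) (𝓝 0) := by
    simpa using (((continuous_rpow_const hp.le).tendsto' 0 0 (zero_rpow hp.ne')).const_mul C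
      |>.mono_left nhdsWithin_le_nhds)
  refine squeeze_zero_norm' ?_ hbound
  filter_upwards [Ioc_mem_nhdsGT zero_lt_one] with b hb using hf b hb

section Limits

variable {c t : ℝ}

lemma tendsto_incBeta_div_rpow (ht : -1 < t) (hc : 1 ≤ c) :
    Tendsto (fun b => incBeta b (t + 1) c / b ^ t) (𝓝[>] 0) (𝓝 0) := by
  refine tendsto_nhdsGT_zero_of_abs_le_mul_rpow (C := (t + 1)⁻¹) one_pos fun b hb => ?_
  have hbt := rpow_pos_of_pos hb.1 t
  rw [abs_div, abs_of_pos hbt, div_le_iff₀ hbt]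
  calc |incBeta b (t + 1) c| ≤ b ^ (t + 1) / (t + 1) :=
        abs_incBeta_le hb.1.le hb.2 (by linarith) hc
    _ = (t + 1)⁻¹ * b ^ (1:ℝ) * b ^ t := by rw [rpow_add hb.1]; ring

lemma tendsto_incBetaLog_div_rpow (ht : -1 < t) (hc : 1 ≤ c) :
    Tendsto (fun b => incBetaLog b (t + 1) c / b ^ t) (𝓝[>] 0) (𝓝 0) := by
  set ε := min 1 (t + 1) / 2 with hε_def
  have hmin : 0 < min 1 (t + 1) := lt_min one_pos (by linarith)
  have hε : 0 < ε := by positivity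
  have hε1 : ε < 1 := by linarith [min_le_left 1 (t + 1)]
  have hεt : ε < t + 1 := by linarith [min_le_right 1 (t + 1)]
  refine tendsto_nhdsGT_zero_of_abs_le_mul_rpow (C := ε⁻¹ * (t + 1 - ε)⁻¹) (p := 1 - ε)
    (by linarith) fun b hb => ?_
  have hbt := rpow_pos_of_pos hb.1 t
  rw [abs_div, abs_of_pos hbt, div_le_iff₀ hbt]
  calc |incBetaLog b (t + 1) c| ≤ ε⁻¹ * (b ^ (t + 1 - ε) / (t + 1 - ε)) :=
        abs_incBetaLog_le hb.1.le hb.2 hc hε hεt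
    _ = ε⁻¹ * (t + 1 - ε)⁻¹ * b ^ (1 - ε) * b ^ t := by
        rw [show t + 1 - ε = 1 - ε + t by ring, rpow_add hb.1]; ring

end Limits

lemma Ccoef_eq {K : ℕ} (hK : 2 ≤ K) {b t : ℝ} (ht : -1 < t) (hb0 : 0 < b) (hb1 : b ≤ 1) :
    Ccoef K b t =
      (incBeta b (t + 1) (K - 1) / b ^ t *
          (incBetaLog 1 (t + 1) (K - 1) / incBeta 1 (t + 1) (K - 1)) -
        incBetaLog b (t + 1) (K - 1) / b ^ t) / (1 - b) ^ (K - 1) := by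
  have hc : (1:ℝ) ≤ K - 1 := by
    rw [le_sub_iff_add_le]; exact_mod_cast hK
  have hG := (incBeta_one_pos (by linarith : 0 < t + 1) hc).ne'
  have hbt := (rpow_pos_of_pos hb0 t).ne'
  rw [Ccoef, Itilde_eq hb0.le hb1 (by linarith) hc]
  field_simp
  ring

/-- The Dirichlet flow-matching coefficient vanishes on the face opposite
the target vertex: `lim_{b → 0⁺} C(b, t) = 0`. -/
theorem Ccoef_tendsto_zero_at_opposite_face (K : ℕ) (hK : 2 ≤ K) (t : ℝ) (ht : 0 ≤ t) :
    Tendsto (fun b : ℝ => Ccoef K b t) (nhdsWithin 0 (Set.Ioi 0)) (nhds 0) := by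
  have hc : (1:ℝ) ≤ K - 1 := by
    rw [le_sub_iff_add_le]; exact_mod_cast hK
  have ht' : -1 < t := by linarith
  have hface : Tendsto (fun b : ℝ => (1 - b) ^ (K - 1)) (𝓝[>] 0) (𝓝 1) := by
    have hcont : Continuous fun b : ℝ => (1 - b) ^ (K - 1) := by fun_prop
    simpa using (hcont.tendsto 0).mono_left nhdsWithin_le_nhds
  have hlim := (((tendsto_incBeta_div_rpow ht' hc).mul_const
    (incBetaLog 1 (t + 1) (K - 1) / incBeta 1 (t + 1) (K - 1))).sub
    (tendsto_incBetaLog_div_rpow ht' hc)).div hface one_ne_zero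
  rw [zero_mul, sub_zero, zero_div] at hlim
  refine hlim.congr' ?_
  filter_upwards [Ioc_mem_nhdsGT zero_lt_one] with b hb
  exact (Ccoef_eq hK ht' hb.1 hb.2).symm
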